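/- Let G be a finite abelian group (written additively) and let A = { t_g : g ∈ G } ≤ Sym(G) be its regular permutation group, where t_g(x) = x + g. If g + g = 0 for every g ∈ G (i.e., G is an elementary abelian 2-group), then A is the automorphism group of a 4-coloured graph on G (A ∈ GR(4)); otherwise A is not the automorphism group of any coloured graph on G (A ∉ GR). -/

import Mathlib

/-- The orbit of a point `x` under a set `G` of permutations of `X`. -/
def orbitOf {X : Type*} (G : Set (Equiv.Perm X)) (x : X) : Set X :=
  {y | ∃ a ∈ G, a x = y}

/-- A permutation `σ` is 2-orbit-compatible with `G` if for every pair of orbits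
`O` and `Q` of `G` there is an element of `G` agreeing with `σ` on `O ∪ Q`. -/
def TwoOrbitCompatible {X : Type*} (G : Set (Equiv.Perm X)) (σ : Equiv.Perm X) : Prop :=
  ∀ x y : X, ∃ a ∈ G, ∀ z ∈ orbitOf G x ∪ orbitOf G y, σ z = a z

/-- A subgroup `A ≤ Sym(X)` is 2-orbit-closed if every permutation that is
2-orbit-compatible with `A` belongs to `A`. -/
def TwoOrbitClosed {X : Type*} (A : Subgroup (Equiv.Perm X)) : Prop :=
  ∀ σ : Equiv.Perm X, TwoOrbitCompatible (A : Set (Equiv.Perm X)) σ → σ ∈ A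

/-- `A` is precisely the automorphism group of the `k`-coloured graph `γ` on `X`. -/
def IsColGraphAutGroup {X : Type*} {k : ℕ} (γ : Sym2 X → Fin k)
    (A : Subgroup (Equiv.Perm X)) : Prop :=
  ∀ σ : Equiv.Perm X, σ ∈ A ↔ ∀ x y : X, x ≠ y → γ s(σ x, σ y) = γ s(x, y)

/-- `A ∈ GR`: `A` is the automorphism group of some coloured graph on `X`. -/
def InGR {X : Type*} (A : Subgroup (Equiv.Perm X)) : Prop :=
  ∃ k : ℕ, 1 ≤ k ∧ ∃ γ : Sym2 X → Fin k, IsColGraphAutGroup γ A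

/-- `A ∈ GR(4)`: `A` is the automorphism group of some 4-coloured graph on `X`. -/
def InGR4 {X : Type*} (A : Subgroup (Equiv.Perm X)) : Prop :=
  ∃ γ : Sym2 X → Fin 4, IsColGraphAutGroup γ A

/-- The regular permutation group of a finite abelian group `G`: the subgroup of
`Sym(G)` consisting of all translations `t_g : x ↦ x + g`. -/
def translations (G : Type*) [AddCommGroup G] : Subgroup (Equiv.Perm G) where
  carrier := {σ | ∃ g : G, σ = Equiv.addRight g}
  one_mem' := ⟨0, by ext x; simp⟩
  mul_mem' := by
    rintro σ τ ⟨g, rfl⟩ ⟨h, rfl⟩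
    exact ⟨h + g, by ext x; simp [add_assoc]⟩
  inv_mem' := by
    rintro σ ⟨g, rfl⟩
    exact ⟨-g, by ext x; simp⟩

/-!
Let `G` be an elementary abelian 2-group with basis `b₀, …, b_{n-1}`, and colour `{x, y}` by the
colour of `x + y` in `{b₀}`, `{b₁, …, b_{n-1}}`, `{bᵢ + bᵢ₊₁}` or the rest. Translations preserve
this colouring. An automorphism `σ` fixing `0` then permutes the basis vectors, fixes `b₀` and maps
consecutive ones to consecutive ones, so it fixes every `bᵢ`. It is also an automorphism of the
cube graph `Cay(G, {bᵢ})`, and one fixing `0` and its neighbours is trivial: if `x` has weight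
`w ≥ 2` and all `x + bᵢ` of weight `w - 1` are fixed, then `σ x + x + bᵢ` is a basis vector for
each of these `w` indices `i`, which forces `σ x = x`.

If some `g` has `g + g ≠ 0`, inversion preserves every translation-invariant colouring, since
`γ{-x, -y} = γ{-x + (x + y), -y + (x + y)}`, but it is not a translation.
-/
open Equiv Function SimpleGraph

def IsColGraphAut {X : Type*} {k : ℕ} (γ : Sym2 X → Fin k) (σ : Perm X) : Prop :=
  ∀ x y : X, x ≠ y → γ s(σ x, σ y) = γ s(x, y)

lemma IsColGraphAut.trans {X : Type*} {k : ℕ} {γ : Sym2 X → Fin k} {σ τ : Perm X}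
    (hσ : IsColGraphAut γ σ) (hτ : IsColGraphAut γ τ) : IsColGraphAut γ (σ.trans τ) :=
  fun x y hxy => (hτ _ _ (σ.injective.ne hxy)).trans (hσ x y hxy)

section Translations

variable {G : Type*} [AddCommGroup G] {k : ℕ} {γ : Sym2 G → Fin k}

lemma neg_mem_translations_iff : Equiv.neg G ∈ translations G ↔ ∀ g : G, g + g = 0 := by
  constructor
  · rintro ⟨g, hg⟩ x
    have hg0 : g = 0 := by simpa using (congrArg (· 0) hg).symm
    have hx : -x = x := by simpa [hg0] using congrArg (· x) hg
    rw [← neg_eq_iff_add_eq_zero, hx]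
  · intro h
    exact ⟨0, Equiv.ext fun x => by simpa using neg_eq_of_add_eq_zero_left (h x)⟩

lemma IsColGraphAut.neg (htrans : ∀ g : G, IsColGraphAut γ (Equiv.addRight g)) :
    IsColGraphAut γ (Equiv.neg G) := by
  intro x y hxy
  have h := htrans (x + y) (-x) (-y) (neg_injective.ne hxy)
  simp only [coe_addRight, show -x + (x + y) = y by abel, show -y + (x + y) = x by abel,
    Sym2.eq_swap] at h
  exact h.symm

lemma isColGraphAutGroup_translations (htrans : ∀ g : G, IsColGraphAut γ (Equiv.addRight g))
    (hstab : ∀ σ : Perm G, IsColGraphAut γ σ → σ 0 = 0 → σ = 1) :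
    IsColGraphAutGroup γ (translations G) := by
  intro σ
  refine ⟨by rintro ⟨g, rfl⟩; exact htrans g, fun hσ => ⟨σ 0, ?_⟩⟩
  have h := hstab _ (IsColGraphAut.trans hσ (htrans (-σ 0))) (by simp)
  ext x
  simpa [sub_eq_iff_eq_add, ← sub_eq_add_neg] using congrArg (· x) h

def sumColouring (c : G → Fin k) : Sym2 G → Fin k :=
  Sym2.lift ⟨fun x y => c (x + y), fun x y => by simp only [add_comm]⟩

lemma isColGraphAut_sumColouring_iff {c : G → Fin k} {σ : Perm G} :
    IsColGraphAut (sumColouring c) σ ↔ ∀ x y, x ≠ y → c (σ x + σ y) = c (x + y) := by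
  simp [IsColGraphAut, sumColouring]

lemma isColGraphAut_sumColouring_addRight (c : G → Fin k) {g : G} (hg : g + g = 0) :
    IsColGraphAut (sumColouring c) (Equiv.addRight g) := by
  rw [isColGraphAut_sumColouring_iff]
  intro x y _
  rw [coe_addRight, add_add_add_comm, hg, add_zero]

end Translations

namespace Module.Basis

variable {ι V : Type*} [AddCommGroup V] [Module (ZMod 2) V] (b : Basis ι (ZMod 2) V)

lemma eq_of_support_repr_eq {x y : V} (h : (b.repr x).support = (b.repr y).support) : x = y := by
  refine b.repr.injective (Finsupp.ext fun i => ?_)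
  by_cases hi : i ∈ (b.repr x).support
  · have hi' := h ▸ hi
    rw [Finsupp.mem_support_iff] at hi hi'
    rw [Fin.eq_one_of_ne_zero _ hi, Fin.eq_one_of_ne_zero _ hi']
  · have hi' := h ▸ hi
    rw [Finsupp.notMem_support_iff] at hi hi'
    rw [hi, hi']

lemma support_repr_add_of_ne [DecidableEq ι] {i j : ι} (hij : i ≠ j) :
    (b.repr (b i + b j)).support = {i, j} := by
  rw [map_add, repr_self, repr_self]
  exact Finsupp.support_single_add_single hij one_ne_zero one_ne_zero

lemma support_repr_add_of_mem [DecidableEq ι] {x : V} {i : ι} (hi : i ∈ (b.repr x).support) :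
    (b.repr (x + b i)).support = (b.repr x).support.erase i := by
  ext j
  rw [Finsupp.mem_support_iff] at hi
  rcases eq_or_ne j i with rfl | hji
  · simp [Fin.eq_one_of_ne_zero _ hi]
    decide
  · simp [hji]

lemma add_notMem_range (i j : ι) : b i + b j ∉ Set.range b := by
  classical
  rintro ⟨k, hk⟩
  rcases eq_or_ne i j with rfl | hij
  · exact b.ne_zero k (hk.trans (ZModModule.add_self _))
  · have h := congrArg (fun x => (b.repr x).support.card) hk
    simp only [support_repr_add_of_ne b hij, repr_self, Finsupp.support_single _ one_ne_zero,
      Finset.card_singleton, Finset.card_pair hij] at h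
    omega

lemma eq_and_eq_or_eq_and_eq_of_add_eq_add {i j k l : ι} (hkl : k ≠ l)
    (h : b i + b j = b k + b l) : i = k ∧ j = l ∨ i = l ∧ j = k := by
  classical
  rcases eq_or_ne i j with rfl | hij
  · rw [ZModModule.add_self, eq_comm, add_eq_zero_iff_eq_neg, ZModModule.neg_eq_self] at h
    exact absurd (b.injective h) hkl
  · have h' := congrArg (fun x => ((b.repr x).support : Set ι)) h
    simp only [support_repr_add_of_ne b hij, support_repr_add_of_ne b hkl, Finset.coe_pair] at h'
    exact Set.pair_eq_pair_iff.1 h'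

lemma mem_support_repr_of_add_mem_range {d : V} {i : ι} (hd : d ≠ 0)
    (h : d + b i ∈ Set.range b) :
    i ∈ (b.repr d).support ∧ (b.repr d).support.card = 2 := by
  classical
  obtain ⟨a, ha⟩ := h
  have hai : a ≠ i := by
    rintro rfl
    exact hd (by simpa using ha.symm)
  have hd' : d = b a + b i := by rw [ha, add_assoc, ZModModule.add_self, add_zero]
  rw [hd', support_repr_add_of_ne b hai]
  simp [hai]

theorem perm_apply_eq_self_of_cube_aut {σ : Perm V} (h0 : σ 0 = 0) (hb : ∀ i, σ (b i) = b i)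
    (hσ : ∀ x y, x + y ∈ Set.range b → σ x + σ y ∈ Set.range b) (x : V) : σ x = x := by
  classical
  induction hN : (b.repr x).support.card using Nat.strong_induction_on generalizing x with
  | _ N ih =>
  rcases Nat.lt_or_ge N 2 with hN2 | hN2
  · interval_cases N
    · obtain rfl : x = 0 := by simpa using hN
      exact h0
    · obtain ⟨i, hi⟩ := Finset.card_eq_one.1 hN
      obtain rfl : x = b i := b.eq_of_support_repr_eq (by simp [hi])
      exact hb i
  by_contra hx
  have hd : σ x + x ≠ 0 := fun h =>
    hx (by rwa [add_eq_zero_iff_eq_neg, ZModModule.neg_eq_self] at h)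
  -- Each neighbour `x + b i` of `x` closer to `0` is fixed, so `σ x + x + b i` is a basis vector.
  have key : ∀ i ∈ (b.repr x).support,
      i ∈ (b.repr (σ x + x)).support ∧ (b.repr (σ x + x)).support.card = 2 := by
    intro i hi
    have hfix : σ (x + b i) = x + b i :=
      ih _ (by rw [support_repr_add_of_mem b hi, Finset.card_erase_of_mem hi]; omega) _ rfl
    refine b.mem_support_repr_of_add_mem_range hd ?_
    have h := hσ x (x + b i) (by rw [← add_assoc, ZModModule.add_self, zero_add]; exact ⟨i, rfl⟩)
    rwa [hfix, ← add_assoc] at h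
  obtain ⟨i, hi⟩ := Finset.card_pos.1 (show 0 < (b.repr x).support.card by omega)
  have hsupp : (b.repr x).support = (b.repr (σ x + x)).support :=
    Finset.eq_of_subset_of_card_le (fun j hj => (key j hj).1) (by rw [(key i hi).2]; omega)
  have hσx : σ x = σ 0 := by
    rw [h0]
    simpa using (b.eq_of_support_repr_eq hsupp).symm
  rw [σ.injective hσx] at hN
  simp at hN
  omega

end Module.Basis

theorem pathGraph_hom_apply_eq_self {n : ℕ} (f : pathGraph n →g pathGraph n)
    (hf : Injective f) (h0 : ∀ i : Fin n, (i : ℕ) = 0 → f i = i) (i : Fin n) : f i = i := by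
  induction hm : (i : ℕ) using Nat.strong_induction_on generalizing i with
  | _ m ih =>
  rcases m with _ | m
  · exact h0 i hm
  let j : Fin n := ⟨m, by omega⟩
  have hj : f j = j := ih m (by omega) j rfl
  have hadj := f.map_rel (pathGraph_adj.2 (Or.inl (by simp [j, hm])) : (pathGraph n).Adj j i)
  rw [hj, pathGraph_adj] at hadj
  rcases hadj with h | h
  · exact Fin.ext (by simp only [j] at h; omega)
  · let j' : Fin n := ⟨m - 1, by omega⟩
    have hj' : f j' = j' := ih (m - 1) (by omega) j' rfl
    have hij' : i = j' := hf (by rw [hj']; exact Fin.ext (by simp only [j, j'] at h ⊢; omega))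
    have := congrArg Fin.val hij'
    simp only [j'] at this
    omega

section PathColour

variable {V : Type*} [AddCommGroup V] [Module (ZMod 2) V] {n : ℕ}
  (b : Module.Basis (Fin n) (ZMod 2) V)

open Classical in
noncomputable def pathColour (x : V) : Fin 4 :=
  if ∃ i : Fin n, (i : ℕ) = 0 ∧ x = b i then 0
  else if x ∈ Set.range b then 1
  else if ∃ i j, (pathGraph n).Adj i j ∧ x = b i + b j then 2
  else 3

lemma pathColour_le_one_iff {x : V} : pathColour b x ≤ 1 ↔ x ∈ Set.range b := by
  unfold pathColour
  split_ifs with h0 h1 <;> simp [*]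
  obtain ⟨i, -, rfl⟩ := h0
  exact ⟨i, rfl⟩

lemma pathColour_eq_zero_iff {x : V} :
    pathColour b x = 0 ↔ ∃ i : Fin n, (i : ℕ) = 0 ∧ x = b i := by
  unfold pathColour
  split_ifs <;> simp_all

lemma pathColour_add_eq_two_iff {i j : Fin n} :
    pathColour b (b i + b j) = 2 ↔ (pathGraph n).Adj i j := by
  have hr := b.add_notMem_range i j
  unfold pathColour
  rw [if_neg (by rintro ⟨k, -, hk⟩; exact hr ⟨k, hk.symm⟩), if_neg hr]
  split_ifs with h
  · obtain ⟨k, l, hkl, he⟩ := h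
    rcases b.eq_and_eq_or_eq_and_eq_of_add_eq_add hkl.ne he with ⟨rfl, rfl⟩ | ⟨rfl, rfl⟩
    · simpa using hkl
    · simpa using hkl.symm
  · simp only [not_exists, not_and] at h
    simpa using fun hij => h i j hij rfl

theorem eq_one_of_preserves_pathColour {σ : Perm V} (h0 : σ 0 = 0)
    (hσ : ∀ x y, x ≠ y → pathColour b (σ x + σ y) = pathColour b (x + y)) : σ = 1 := by
  have hcube : ∀ x y, x + y ∈ Set.range b → σ x + σ y ∈ Set.range b := by
    intro x y hxy
    have hne : x ≠ y := by
      rintro rfl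
      obtain ⟨i, hi⟩ := hxy
      exact b.ne_zero i (hi.trans (ZModModule.add_self x))
    rw [← pathColour_le_one_iff] at hxy ⊢
    rwa [hσ x y hne]
  have hbasis : ∀ i, σ (b i) ∈ Set.range b := fun i => by
    simpa [h0] using hcube (b i) 0 (by simp)
  choose f hf using hbasis
  let F : pathGraph n →g pathGraph n :=
    ⟨f, fun {i j} hij => by
      rwa [← pathColour_add_eq_two_iff b, hf, hf, hσ _ _ (b.injective.ne hij.ne),
        pathColour_add_eq_two_iff]⟩
  have hF : Injective F := fun i j h =>
    b.injective (σ.injective (by rw [← hf, ← hf]; exact congrArg b h))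
  have hroot : ∀ i : Fin n, (i : ℕ) = 0 → F i = i := by
    intro i hi
    have h := hσ (b i) 0 (b.ne_zero i)
    simp only [h0, add_zero] at h
    obtain ⟨j, hj, hji⟩ := (pathColour_eq_zero_iff b).1
      (h.trans ((pathColour_eq_zero_iff b).2 ⟨i, hi, rfl⟩))
    have hfj : f i = j := b.injective ((hf i).trans hji)
    exact hfj.trans (Fin.ext (hj.trans hi.symm))
  ext x
  refine b.perm_apply_eq_self_of_cube_aut h0 (fun i => ?_) hcube x
  rw [← hf, show f i = i from pathGraph_hom_apply_eq_self F hF hroot i]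

end PathColour

theorem statement13 (G : Type*) [AddCommGroup G] [Fintype G] :
    ((∀ g : G, g + g = 0) → InGR4 (translations G)) ∧
      ((¬ ∀ g : G, g + g = 0) → ¬ InGR (translations G)) := by
  refine ⟨fun h2 => ?_, fun h hGR => ?_⟩
  · let _ : Module (ZMod 2) G := AddCommGroup.zmodModule (by simpa [two_nsmul] using h2)
    let b := Module.finBasis (ZMod 2) G
    exact ⟨sumColouring (pathColour b), isColGraphAutGroup_translations
      (fun g => isColGraphAut_sumColouring_addRight _ (h2 g))
      fun σ hσ h0 => eq_one_of_preserves_pathColour b h0 (isColGraphAut_sumColouring_iff.1 hσ)⟩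
  · obtain ⟨k, -, γ, hγ⟩ := hGR
    have htrans : ∀ g : G, IsColGraphAut γ (Equiv.addRight g) := fun g => (hγ _).1 ⟨g, rfl⟩
    exact h (neg_mem_translations_iff.1 ((hγ _).2 (IsColGraphAut.neg htrans)))
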